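/- In 𝔽₂₃, let A₁ = {(a,0,0,0,0) : a ∈ ℝ} ∪ {(at, t, −at²/2, a²t³/6, at³/3) : a ∈ ℝ, t > 0}, and let S₁ be the subsemigroup of (ℝ⁵, ∗) generated by A₁. Then: (i) for every t > 0 the point (0, 2t, −t, t/2, t²) (which is exp(t(2X₂ − X₃ + (1/2)X₄)), the exponential of an element of the wedge tangent to the closure of S₁) belongs to the topological closure of S₁; and (ii) for t = 1 the point (0, 2, −1, 1/2, 1) belongs to the topological interior of S₁. In particular, the exponential image of the wedge tangent to closure(S₁) meets the interior of S₁. -/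

import Mathlib

/-- The group operation of the free Carnot group `𝔽₂₃` of rank 2 and step 3, in
exponential coordinates of the second kind on `ℝ⁵`. -/
noncomputable def F23mul (x y : Fin 5 → ℝ) : Fin 5 → ℝ :=
  ![x 0 + y 0,
    x 1 + y 1,
    x 2 + y 2 - x 0 * y 1,
    x 3 + y 3 - x 0 * y 2 + x 0 ^ 2 * y 1 / 2,
    x 4 + y 4 + x 0 * x 1 * y 1 + x 0 * y 1 ^ 2 / 2 - x 1 * y 2]

/-- The smallest subset of `α` containing `A` and closed under `mul`
(the subsemigroup generated by `A`). -/
def genSemigroup {α : Type*} (mul : α → α → α) (A : Set α) : Set α :=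
  ⋂₀ {S : Set α | A ⊆ S ∧ ∀ x ∈ S, ∀ y ∈ S, mul x y ∈ S}

/-- The exponential image of the closed horizontal half-space with inner normal `X₂`. -/
noncomputable def A1 : Set (Fin 5 → ℝ) :=
  {p | ∃ a : ℝ, p = ![a, 0, 0, 0, 0]} ∪
  {p | ∃ a t : ℝ, 0 < t ∧
    p = ![a * t, t, -(a * t ^ 2) / 2, a ^ 2 * t ^ 3 / 6, a * t ^ 3 / 3]}


/-!
Conjugating a vertical flow `exp(t₂X₂)` by `exp(sX₁)` produces motion in the `X₃`, `X₄`, `X₅`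
directions, so the word `exp(t₁X₂) exp(sX₁) exp(t₂X₂) exp(-sX₁) exp(t₃X₂) exp(cX₁)` of elements of
`A₁` has five free parameters. Its coordinates can be inverted explicitly: on an open set of
points the inverse has `t₁, t₂, t₃ > 0`. That open set lies in `S₁` and contains the whole curve
`t ↦ (0, 2t, −t, t/2, t²)`, `t > 0`, which gives both (i) and (ii).
-/

section genSemigroup

variable {α : Type*} {mul : α → α → α} {A : Set α}

theorem subset_genSemigroup : A ⊆ genSemigroup mul A :=
  fun _ hx _ hS => hS.1 hx

theorem mul_mem_genSemigroup {x y : α} (hx : x ∈ genSemigroup mul A)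
    (hy : y ∈ genSemigroup mul A) : mul x y ∈ genSemigroup mul A :=
  fun S hS => hS.2 x (hx S hS) y (hy S hS)

end genSemigroup

namespace F23

local infixl:70 " ⋆ " => F23mul

noncomputable def expX₁ (s : ℝ) : Fin 5 → ℝ := ![s, 0, 0, 0, 0]

noncomputable def expX₂ (t : ℝ) : Fin 5 → ℝ := ![0, t, 0, 0, 0]

theorem expX₁_mem_A1 (s : ℝ) : expX₁ s ∈ A1 := Or.inl ⟨s, rfl⟩

theorem expX₂_mem_A1 {t : ℝ} (ht : 0 < t) : expX₂ t ∈ A1 := by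
  refine Or.inr ⟨0, t, ht, ?_⟩
  funext i; fin_cases i <;> simp [expX₂]

noncomputable def word (t₁ s t₂ t₃ c : ℝ) : Fin 5 → ℝ :=
  expX₂ t₁ ⋆ expX₁ s ⋆ expX₂ t₂ ⋆ expX₁ (-s) ⋆ expX₂ t₃ ⋆ expX₁ c

theorem word_eq (t₁ s t₂ t₃ c : ℝ) :
    word t₁ s t₂ t₃ c =
      ![c, t₁ + t₂ + t₃, -(s * t₂), s ^ 2 * t₂ / 2, s * t₁ * t₂ + s * t₂ ^ 2 / 2] := by
  funext i; fin_cases i <;> simp [word, F23mul, expX₁, expX₂]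

theorem word_mem_genSemigroup {t₁ t₂ t₃ : ℝ} (s c : ℝ) (h₁ : 0 < t₁) (h₂ : 0 < t₂)
    (h₃ : 0 < t₃) : word t₁ s t₂ t₃ c ∈ genSemigroup F23mul A1 := by
  have hX₁ (s : ℝ) := subset_genSemigroup (mul := F23mul) (expX₁_mem_A1 s)
  have hX₂ {t : ℝ} (ht : 0 < t) := subset_genSemigroup (mul := F23mul) (expX₂_mem_A1 ht)
  unfold word
  repeat' apply mul_mem_genSemigroup
  all_goals first | exact hX₁ _ | exact hX₂ ‹_›

/-- The values of `word` with `t₁, t₂, t₃ > 0`; the last two inequalities are `t₁ > 0` and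
`t₃ > 0` for the parameters solved for in `reachable_subset_genSemigroup`. -/
def reachable : Set (Fin 5 → ℝ) :=
  {y | y 2 < 0 ∧ 0 < y 3 ∧ 0 < y 2 ^ 3 + 4 * y 3 * y 4 ∧
    4 * y 1 * y 2 * y 3 - y 2 ^ 3 + 4 * y 3 * y 4 < 0}

theorem isOpen_reachable : IsOpen reachable :=
  (isOpen_lt (by fun_prop) continuous_const).and <|
    (isOpen_lt continuous_const (by fun_prop)).and <|
      (isOpen_lt continuous_const (by fun_prop)).and (isOpen_lt (by fun_prop) continuous_const)

theorem reachable_subset_genSemigroup : reachable ⊆ genSemigroup F23mul A1 := by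
  rintro y ⟨h2, h3, hP, hQ⟩
  have hy2 : y 2 ≠ 0 := h2.ne
  have hy3 : y 3 ≠ 0 := h3.ne'
  set s := -(2 * y 3) / y 2
  set t₂ := y 2 ^ 2 / (2 * y 3)
  set t₁ := (y 2 ^ 3 + 4 * y 3 * y 4) / (-(4 * y 2 * y 3))
  set t₃ := y 1 - t₁ - t₂
  have hden : 0 < -(4 * y 2 * y 3) := by nlinarith
  have ht₁ : 0 < t₁ := div_pos hP hden
  have ht₂ : 0 < t₂ := div_pos (sq_pos_of_neg h2) (by linarith)
  have ht₃ : 0 < t₃ := by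
    have : t₃ = (4 * y 1 * y 2 * y 3 - y 2 ^ 3 + 4 * y 3 * y 4) / (4 * y 2 * y 3) := by
      simp only [t₃, t₁, t₂]; field_simp; ring
    rw [this]
    exact div_pos_of_neg_of_neg hQ (by linarith)
  have hy : word t₁ s t₂ t₃ (y 0) = y := by
    rw [word_eq]
    funext i
    fin_cases i
    · rfl
    · show t₁ + t₂ + t₃ = y 1
      ring
    · show -(s * t₂) = y 2
      simp only [s, t₂]; field_simp
    · show s ^ 2 * t₂ / 2 = y 3
      simp only [s, t₂]; field_simp
    · show s * t₁ * t₂ + s * t₂ ^ 2 / 2 = y 4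
      simp only [s, t₁, t₂]; field_simp; ring
  exact hy ▸ word_mem_genSemigroup s (y 0) ht₁ ht₂ ht₃

theorem wedge_mem_reachable {t : ℝ} (ht : 0 < t) :
    (![0, 2 * t, -t, t / 2, t ^ 2] : Fin 5 → ℝ) ∈ reachable := by
  refine ⟨?_, ?_, ?_, ?_⟩ <;>
    simp only [Matrix.cons_val, Matrix.cons_val_one, Matrix.cons_val_zero] <;>
    nlinarith [pow_pos ht 3]

end F23

/-- In `𝔽₂₃`, the points `exp(t(2X₂ − X₃ + ½X₄)) = (0, 2t, −t, t/2, t²)` of the wedge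
tangent to the closure of the semigroup `S₁` generated by the closed horizontal
half-space lie in the closure of `S₁`, and at `t = 1` the point `(0, 2, −1, 1/2, 1)`
lies in the interior of `S₁`: the exponential image of the wedge meets the interior
of the semigroup. -/
theorem F23_wedge_meets_interior :
    (∀ t : ℝ, 0 < t →
      (![0, 2 * t, -t, t / 2, t ^ 2] : Fin 5 → ℝ) ∈
        closure (genSemigroup F23mul A1)) ∧
    (![0, 2, -1, 1 / 2, 1] : Fin 5 → ℝ) ∈ interior (genSemigroup F23mul A1) := by
  have hsub := F23.reachable_subset_genSemigroup
  refine ⟨fun t ht => subset_closure (hsub (F23.wedge_mem_reachable ht)), ?_⟩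
  simpa using interior_maximal hsub F23.isOpen_reachable (F23.wedge_mem_reachable one_pos)
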